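/- Define I(n) = 1/(n!)^2 for positive integers n, and for s=1 define OC(n) := (2n-2)!·I(n) - Σ_K ((2n-2)!/(2n-r_K)!)·(1/r_K!)·Π_{i=1}^{r_K}(2k_i - 1)·OC(k_i), over ordered partitions K of n into r_K ≥ 2 positive parts. Then OC(1) = 1 and OC(n) = 0 for all n ≥ 2. -/
import Mathlib


open Nat Finset

/-- For `s = 1`, with `I n = 1/(n!)²`, the recursion
`OC n = (2n-2)!·I n - Σ_K ((2n-2)!/(2n-r_K)!)·(1/r_K!)·Π (2kᵢ-1)·OC kᵢ`
over ordered partitions of `n` into at least two positive parts gives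
`OC 1 = 1` and `OC n = 0` for all `n ≥ 2`. -/
theorem stmt_4 (OC : ℕ → ℚ)
    (hrec : ∀ n : ℕ, 0 < n →
      OC n = (Nat.factorial (2 * n - 2) : ℚ) * (1 / (Nat.factorial n : ℚ) ^ 2)
        - ∑ K ∈ Finset.univ.filter (fun K : Composition n => 2 ≤ K.length),
            ((Nat.factorial (2 * n - 2) : ℚ) / (Nat.factorial (2 * n - K.length) : ℚ)) *
              (1 / (Nat.factorial K.length : ℚ)) *
              (K.blocks.map (fun k => (((2 * k : ℕ) : ℚ) - 1) * OC k)).prod) :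
    OC 1 = 1 ∧ ∀ n : ℕ, 2 ≤ n → OC n = 0 := by
  have h1 : OC 1 = 1 := by
    have h := hrec 1 one_pos
    rw [Finset.filter_false_of_mem, Finset.sum_empty] at h
    · simpa using h
    · intro K _
      have := K.length_le
      omega
  refine ⟨h1, ?_⟩
  intro n
  induction n using Nat.strong_induction_on with
  | _ n ih =>
    intro hn
    have hrecn := hrec n (by omega)
    have hsum : ∑ K ∈ Finset.univ.filter (fun K : Composition n => 2 ≤ K.length),
        ((Nat.factorial (2 * n - 2) : ℚ) / (Nat.factorial (2 * n - K.length) : ℚ)) *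
          (1 / (Nat.factorial K.length : ℚ)) *
          (K.blocks.map (fun k => (((2 * k : ℕ) : ℚ) - 1) * OC k)).prod
        = ((Nat.factorial (2 * n - 2) : ℚ) / (Nat.factorial n : ℚ)) *
            (1 / (Nat.factorial n : ℚ)) := by
      rw [Finset.sum_eq_single (Composition.ones n)]
      · rw [Composition.ones_length, Composition.ones_blocks]
        have h2n : 2 * n - n = n := by omega
        simp [h2n, h1]
        norm_num
      · intro K hK hne
        obtain ⟨i, hi, hlt⟩ := Composition.ne_ones_iff.mp hne
        simp only [Finset.mem_filter] at hK
        have hilt : i < n := by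
          obtain ⟨l1, l2, hl⟩ := List.append_of_mem hi
          have hsum := K.blocks_sum
          have hlen : 2 ≤ K.blocks.length := by rw [K.blocks_length]; exact hK.2
          rw [hl] at hsum hlen
          simp only [List.sum_append, List.sum_cons, List.length_append,
            List.length_cons] at hsum hlen
          have hpos : ∀ j ∈ l1 ++ l2, 1 ≤ j := by
            intro j hj
            apply K.blocks_pos
            rw [hl]
            simp only [List.mem_append, List.mem_cons] at hj ⊢
            tauto
          have hls := List.length_le_sum_of_one_le _ hpos
          simp only [List.length_append, List.sum_append] at hls
          omega
        have hOC : OC i = 0 := ih i hilt hlt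
        have : (0:ℚ) ∈ K.blocks.map (fun k => (((2 * k : ℕ) : ℚ) - 1) * OC k) := by
          rw [List.mem_map]
          exact ⟨i, hi, by rw [hOC]; ring⟩
        rw [List.prod_eq_zero this, mul_zero]
      · intro h
        exfalso
        apply h
        simp [Composition.ones_length]
        omega
    rw [hsum] at hrecn
    have hfac : (Nat.factorial n : ℚ) ≠ 0 := by
      exact_mod_cast Nat.factorial_ne_zero n
    rw [hrecn]
    field_simp
    ring
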